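/- arXiv:2401.13971 — 2 statements merged into one kernel-verified Lean document; each statement's English description precedes it below -/
import Mathlib

section
/- One-step descent under unknown (sample-dependent) Lipschitz continuity: Let ρ > κ + τ and let γ > ρ be deterministic (independent of the sample ξ). Let x ∈ ℝⁿ be fixed and let x⁺(ξ) = argmin_y { f_x(y,ξ) + ω(y) + (γ/2)‖y − x‖² } for ξ ∼ Ξ. Then E_ξ[ψ_{1/ρ}(x⁺(ξ))] ≤ ψ_{1/ρ}(x) − (ρ(ρ − τ − κ)/(2(γ − κ)))‖x̂ − x‖² + E_ξ[ ρ(Lip(x,ξ) + L_ω)² / (2γ(γ − κ)) ], where x̂ = prox_{ψ/ρ}(x). -/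
/-!
The regularized model `F(y) = f_x(y, ξ) + ω(y) + γ/2 ‖y - x‖²` is `(γ - κ)`-strongly convex, so its
minimizer `x⁺` grows quadratically: `F(x⁺) + (γ - κ)/2 ‖x̂ - x⁺‖² ≤ F(x̂)`. The Lipschitz bounds at
`x` and Young's inequality give `F(x⁺) ≥ f_x(x, ξ) + ω(x) - (Lip(x, ξ) + L_ω)² / (2γ)`. Testing the
Moreau envelope at `x⁺` with the point `x̂` turns this into a bound on `ψ_{1/ρ}(x⁺)`; the leftover
model error at `x̂` has mean at most `τ/2 ‖x̂ - x‖²`, and `ψ(x̂) + ρ/2 ‖x̂ - x‖² ≤ ψ(x)` closes the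
estimate.
-/

open MeasureTheory Set Filter Topology RealInnerProductSpace

theorem mul_le_half_mul_sq_add_sq_div {γ : ℝ} (hγ : 0 < γ) (a r : ℝ) :
    a * r ≤ γ / 2 * r ^ 2 + a ^ 2 / (2 * γ) := by
  have : γ / 2 * r ^ 2 + a ^ 2 / (2 * γ) - a * r = (γ * r - a) ^ 2 / (2 * γ) := by
    field_simp; ring
  rw [← sub_nonneg, this]
  positivity

section Convex

variable {E : Type*} [NormedAddCommGroup E] [InnerProductSpace ℝ E]

theorem StrongConvexOn.add_sq_norm_sub_le_of_isMinOn {s : Set E} {m : ℝ} {f : E → ℝ} {u y : E}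
    (hf : StrongConvexOn s m f) (hu : IsMinOn f s u) (hus : u ∈ s) (hys : y ∈ s) :
    f u + m / 2 * ‖y - u‖ ^ 2 ≤ f y := by
  have hsegment : ∀ t ∈ Ioo (0 : ℝ) 1, f u + (1 - t) * (m / 2 * ‖y - u‖ ^ 2) ≤ f y := by
    rintro t ⟨ht0, ht1⟩
    have hconv := hf.2 hus hys (sub_nonneg.2 ht1.le) ht0.le (sub_add_cancel 1 t)
    have hmin : f u ≤ f ((1 - t) • u + t • y) :=
      hu (hf.1 hus hys (sub_nonneg.2 ht1.le) ht0.le (sub_add_cancel 1 t))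
    rw [smul_eq_mul, smul_eq_mul, norm_sub_rev] at hconv
    have : t * (f u + (1 - t) * (m / 2 * ‖y - u‖ ^ 2)) ≤ t * f y := by linarith
    exact le_of_mul_le_mul_left this ht0
  have hlim : Tendsto (fun t : ℝ => f u + (1 - t) * (m / 2 * ‖y - u‖ ^ 2)) (𝓝[>] 0)
      (𝓝 (f u + m / 2 * ‖y - u‖ ^ 2)) := by
    have hcont : Continuous fun t : ℝ => f u + (1 - t) * (m / 2 * ‖y - u‖ ^ 2) := by fun_prop
    simpa using tendsto_nhdsWithin_of_tendsto_nhds (hcont.tendsto 0)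
  exact le_of_tendsto hlim (eventually_of_mem (Ioo_mem_nhdsGT zero_lt_one) hsegment)

theorem strongConvexOn_add_add_sq_norm_sub {g w : E → ℝ} {κ : ℝ} (hg : ConvexOn ℝ univ g)
    (hw : ConvexOn ℝ univ fun y => w y + κ / 2 * ‖y‖ ^ 2) (x : E) (γ : ℝ) :
    StrongConvexOn univ (γ - κ) fun y => g y + w y + γ / 2 * ‖y - x‖ ^ 2 := by
  have haffine : ConvexOn ℝ univ fun y => (-γ) * ⟪x, y⟫ + γ / 2 * ‖x‖ ^ 2 :=
    (((-γ) • innerₛₗ ℝ x).convexOn convex_univ).add_const _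
  have hsplit : (fun y => g y + w y + γ / 2 * ‖y - x‖ ^ 2 - (γ - κ) / 2 * ‖y‖ ^ 2) =
      fun y => g y + ((w y + κ / 2 * ‖y‖ ^ 2) + ((-γ) * ⟪x, y⟫ + γ / 2 * ‖x‖ ^ 2)) := by
    funext y
    rw [norm_sub_sq_real, real_inner_comm]
    ring
  rw [strongConvexOn_iff_convex, hsplit]
  exact hg.add (hw.add haffine)

theorem sq_norm_sub_le_of_isMinOn_model {g w : E → ℝ} {κ γ L Lw : ℝ} {x u : E}
    (hg : ConvexOn ℝ univ g) (hw : ConvexOn ℝ univ fun y => w y + κ / 2 * ‖y‖ ^ 2) (hγ : 0 < γ)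
    (hu : IsMinOn (fun y => g y + w y + γ / 2 * ‖y - x‖ ^ 2) univ u)
    (hgL : g x - g u ≤ L * ‖x - u‖) (hwL : w x - w u ≤ Lw * ‖x - u‖) (z : E) :
    (γ - κ) / 2 * ‖z - u‖ ^ 2 ≤
      g z - g x + (w z - w x + γ / 2 * ‖z - x‖ ^ 2) + (L + Lw) ^ 2 / (2 * γ) := by
  have hgrowth := (strongConvexOn_add_add_sq_norm_sub hg hw x γ).add_sq_norm_sub_le_of_isMinOn
    hu (mem_univ u) (mem_univ z)
  have hsq := mul_le_half_mul_sq_add_sq_div hγ (L + Lw) ‖u - x‖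
  rw [norm_sub_rev] at hgL hwL
  linarith

theorem moreau_le_of_isMinOn_model {ψ f w m moreau : E → ℝ} {prox : E → E}
    {κ τ ρ γ L Lw : ℝ} {x u : E} (hρ : 0 ≤ ρ) (hκγ : κ < γ) (hγ : 0 < γ)
    (hψ : ∀ y, ψ y = f y + w y)
    (hprox : ∀ y z, ψ (prox y) + ρ / 2 * ‖prox y - y‖ ^ 2 ≤ ψ z + ρ / 2 * ‖z - y‖ ^ 2)
    (hmoreau : ∀ y, moreau y = ψ (prox y) + ρ / 2 * ‖prox y - y‖ ^ 2)
    (hm : ConvexOn ℝ univ m) (hw : ConvexOn ℝ univ fun y => w y + κ / 2 * ‖y‖ ^ 2)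
    (hu : IsMinOn (fun y => m y + w y + γ / 2 * ‖y - x‖ ^ 2) univ u)
    (hmL : m x - m u ≤ L * ‖x - u‖) (hwL : w x - w u ≤ Lw * ‖x - u‖) :
    moreau u ≤ moreau x - ρ * (ρ - τ - κ) / (2 * (γ - κ)) * ‖prox x - x‖ ^ 2
      + ρ / (γ - κ) * (m (prox x) - m x - (f (prox x) - f x + τ / 2 * ‖prox x - x‖ ^ 2))
      + ρ * (L + Lw) ^ 2 / (2 * γ * (γ - κ)) := by
  have hγκ : 0 < γ - κ := sub_pos.2 hκγ
  have ha : 0 ≤ ρ / (γ - κ) := div_nonneg hρ hγκ.le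
  have hdist := mul_le_mul_of_nonneg_left
    (sq_norm_sub_le_of_isMinOn_model hm hw hγ hu hmL hwL (prox x)) ha
  have hdesc : ψ (prox x) - ψ x ≤ -(ρ / 2 * ‖prox x - x‖ ^ 2) := by
    linarith [show ψ (prox x) + ρ / 2 * ‖prox x - x‖ ^ 2 ≤ ψ x by simpa using hprox x x]
  rw [hψ, hψ] at hdesc
  have hdesc' := mul_le_mul_of_nonneg_left hdesc ha
  have hdist_scale :
      ρ / (γ - κ) * ((γ - κ) / 2 * ‖prox x - u‖ ^ 2) = ρ / 2 * ‖prox x - u‖ ^ 2 := by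
    field_simp
  have hlip_scale :
      ρ / (γ - κ) * ((L + Lw) ^ 2 / (2 * γ)) = ρ * (L + Lw) ^ 2 / (2 * γ * (γ - κ)) := by
    field_simp
  have hcoef : ρ / (γ - κ) * ((γ + τ - ρ) / 2) = ρ / 2 - ρ * (ρ - τ - κ) / (2 * (γ - κ)) := by
    field_simp; ring
  rw [hmoreau, hmoreau]
  linarith [hprox u (prox x), congrArg (· * ‖prox x - x‖ ^ 2) hcoef]

end Convex

section Expectation

variable {S : Type*} [MeasurableSpace S] {μ : Measure S}

theorem MeasureTheory.Integrable.add_const_sq [IsFiniteMeasure μ] {L : S → ℝ}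
    (hL : ∀ s, 0 ≤ L s) (hL2 : Integrable (fun s => L s ^ 2) μ) (c : ℝ) :
    Integrable (fun s => (L s + c) ^ 2) μ := by
  have hmeas : AEStronglyMeasurable L μ :=
    (Real.continuous_sqrt.comp_aestronglyMeasurable hL2.aestronglyMeasurable).congr
      (.of_forall fun s => Real.sqrt_sq (hL s))
  exact (((memLp_two_iff_integrable_sq hmeas).2 hL2).add (memLp_const c)).integrable_sq

theorem integral_le_add_integral_of_le_add_mul [IsProbabilityMeasure μ] {Y e g : S → ℝ}
    {K a : ℝ} (hY : Integrable Y μ) (he : Integrable e μ) (hg : Integrable g μ) (ha : 0 ≤ a)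
    (he0 : ∫ s, e s ∂μ ≤ 0) (h : ∀ s, Y s ≤ K + a * e s + g s) :
    ∫ s, Y s ∂μ ≤ K + ∫ s, g s ∂μ := by
  have hKe : Integrable (fun s => K + a * e s) μ := (integrable_const K).add (he.const_mul a)
  calc ∫ s, Y s ∂μ ≤ ∫ s, (K + a * e s + g s) ∂μ := integral_mono hY (hKe.add hg) h
    _ = K + a * ∫ s, e s ∂μ + ∫ s, g s ∂μ := by
      rw [integral_add hKe hg, integral_add (integrable_const K) (he.const_mul a), integral_const,
        integral_const_mul]
      simp
    _ ≤ K + ∫ s, g s ∂μ := by linarith [mul_nonpos_of_nonneg_of_nonpos ha he0]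

end Expectation

theorem one_step_descent_unknown_lipschitz_general
    {n : ℕ} {S : Type*} [MeasurableSpace S] (μ : Measure S) [IsProbabilityMeasure μ]
    (f w ψ : EuclideanSpace ℝ (Fin n) → ℝ)
    (fmod : EuclideanSpace ℝ (Fin n) → EuclideanSpace ℝ (Fin n) → S → ℝ)
    (Lip : EuclideanSpace ℝ (Fin n) → S → ℝ) (κ τ ρ γ Lw : ℝ)
    (prox : EuclideanSpace ℝ (Fin n) → EuclideanSpace ℝ (Fin n))
    (moreau : EuclideanSpace ℝ (Fin n) → ℝ)
    -- basic parameter assumptions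
    (hκ : 0 ≤ κ) (hτ : 0 ≤ τ) (hρ : κ + τ < ρ) (hγ : ρ < γ)
    -- composite objective
    (hψdef : ∀ x, ψ x = f x + w x)
    -- A2: `w` is κ-weakly convex and L_ω-Lipschitz
    (hw_weak : ConvexOn ℝ Set.univ (fun x => w x + κ / 2 * ‖x‖ ^ 2))
    (hw_lip : ∀ x y, |w x - w y| ≤ Lw * ‖x - y‖)
    -- A3: properties of the stochastic model
    (hmodel_conv : ∀ x s, ConvexOn ℝ Set.univ (fun y => fmod x y s))
    (hmodel_int : ∀ x y, Integrable (fun s => fmod x y s) μ)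
    (hmodel_center : ∀ x, ∫ s, fmod x x s ∂μ = f x)
    (hmodel_acc : ∀ x y, (∫ s, fmod x y s ∂μ) - f y ≤ τ / 2 * ‖x - y‖ ^ 2)
    -- D1: sample-dependent Lipschitz continuity of the models
    (hLip_nonneg : ∀ x s, 0 ≤ Lip x s)
    (hD1 : ∀ x y z s, fmod x z s - fmod x y s ≤ Lip x s * ‖z - y‖)
    -- D2: reference Lipschitz continuity
    (hLip_sq_int : ∀ x, Integrable (fun s => Lip x s ^ 2) μ)
    -- Moreau envelope `ψ_{1/ρ}` and proximal mapping `prox = prox_{ψ/ρ}`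
    (hprox : ∀ x z, ψ (prox x) + ρ / 2 * ‖prox x - x‖ ^ 2 ≤ ψ z + ρ / 2 * ‖z - x‖ ^ 2)
    (hmoreau : ∀ x, moreau x = ψ (prox x) + ρ / 2 * ‖prox x - x‖ ^ 2)
    -- the current point and the stochastic one-step update
    (x : EuclideanSpace ℝ (Fin n)) (xplus : S → EuclideanSpace ℝ (Fin n))
    (hupdate : ∀ s y,
      fmod x (xplus s) s + w (xplus s) + γ / 2 * ‖xplus s - x‖ ^ 2
        ≤ fmod x y s + w y + γ / 2 * ‖y - x‖ ^ 2)
    (hint : Integrable (fun s => moreau (xplus s)) μ) :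
    ∫ s, moreau (xplus s) ∂μ
      ≤ moreau x - ρ * (ρ - τ - κ) / (2 * (γ - κ)) * ‖prox x - x‖ ^ 2
        + ∫ s, ρ * (Lip x s + Lw) ^ 2 / (2 * γ * (γ - κ)) ∂μ := by
  have hκγ : κ < γ := by linarith
  have hdiff : Integrable (fun s => fmod x (prox x) s - fmod x x s) μ :=
    (hmodel_int x (prox x)).sub (hmodel_int x x)
  refine integral_le_add_integral_of_le_add_mul hint ?herr ?hlip
    (div_nonneg (by linarith) (sub_pos.2 hκγ).le) ?herr_mean fun s =>
      moreau_le_of_isMinOn_model (τ := τ) (by linarith) hκγ (by linarith) hψdef hprox hmoreau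
        (hmodel_conv x s) hw_weak (fun y _ => hupdate s y) (hD1 x (xplus s) x s)
        ((le_abs_self _).trans (hw_lip x _))
  case herr => exact hdiff.sub (integrable_const _)
  case hlip => exact (((hLip_sq_int x).add_const_sq (hLip_nonneg x) Lw).const_mul ρ).div_const _
  case herr_mean =>
    have hacc := hmodel_acc x (prox x)
    rw [norm_sub_rev] at hacc
    rw [integral_sub hdiff (integrable_const _), integral_const,
      integral_sub (hmodel_int x (prox x)) (hmodel_int x x), hmodel_center]
    simp only [probReal_univ, one_smul]
    linarith

/-- **Lemma 3.4** (one-step descent under unknown, sample-dependent Lipschitz continuity).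
The models satisfy D1: `fmod x z s - fmod x y s ≤ Lip(x,s) ‖z - y‖`, and the reference
Lipschitz continuity D2: `E_{ξ,ξ'}[|Lip(x,ξ) - Lip(x,ξ')|²] ≤ σ²`. With `ρ > κ + τ` and a
deterministic `γ > ρ` (independent of the sample), for `x⁺(ξ)` the minimizer of the
regularized model at `x`,
`E_ξ[ψ_{1/ρ}(x⁺(ξ))] ≤ ψ_{1/ρ}(x) - ρ(ρ-τ-κ)/(2(γ-κ)) ‖x̂-x‖²
  + E_ξ[ρ(Lip(x,ξ) + L_ω)²/(2γ(γ-κ))]`. -/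
theorem one_step_descent_unknown_lipschitz
    {n : ℕ} {S : Type*} [MeasurableSpace S] (μ : Measure S) [IsProbabilityMeasure μ]
    (f w ψ : EuclideanSpace ℝ (Fin n) → ℝ)
    (fmod : EuclideanSpace ℝ (Fin n) → EuclideanSpace ℝ (Fin n) → S → ℝ)
    (Lip : EuclideanSpace ℝ (Fin n) → S → ℝ) (κ τ ρ γ Lw σ : ℝ)
    (prox : EuclideanSpace ℝ (Fin n) → EuclideanSpace ℝ (Fin n))
    (moreau : EuclideanSpace ℝ (Fin n) → ℝ)
    -- basic parameter assumptions
    (hκ : 0 ≤ κ) (hτ : 0 ≤ τ) (hρ : κ + τ < ρ) (hγ : ρ < γ)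
    (hLw : 0 ≤ Lw) (hσ : 0 ≤ σ)
    -- composite objective
    (hψdef : ∀ x, ψ x = f x + w x)
    -- A2: `w` is κ-weakly convex and L_ω-Lipschitz
    (hw_weak : ConvexOn ℝ Set.univ (fun x => w x + κ / 2 * ‖x‖ ^ 2))
    (hw_lip : ∀ x y, |w x - w y| ≤ Lw * ‖x - y‖)
    -- A3: properties of the stochastic model
    (hmodel_conv : ∀ x s, ConvexOn ℝ Set.univ (fun y => fmod x y s))
    (hmodel_int : ∀ x y, Integrable (fun s => fmod x y s) μ)
    (hmodel_center : ∀ x, ∫ s, fmod x x s ∂μ = f x)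
    (hmodel_acc : ∀ x y, (∫ s, fmod x y s ∂μ) - f y ≤ τ / 2 * ‖x - y‖ ^ 2)
    -- D1: sample-dependent Lipschitz continuity of the models
    (hLip_nonneg : ∀ x s, 0 ≤ Lip x s)
    (hD1 : ∀ x y z s, fmod x z s - fmod x y s ≤ Lip x s * ‖z - y‖)
    -- D2: reference Lipschitz continuity
    (hLip_sq_int : ∀ x, Integrable (fun s => Lip x s ^ 2) μ)
    (hD2 : ∀ x, ∫ s, ∫ s', |Lip x s - Lip x s'| ^ 2 ∂μ ∂μ ≤ σ ^ 2)
    -- Moreau envelope `ψ_{1/ρ}` and proximal mapping `prox = prox_{ψ/ρ}`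
    (hprox : ∀ x z, ψ (prox x) + ρ / 2 * ‖prox x - x‖ ^ 2 ≤ ψ z + ρ / 2 * ‖z - x‖ ^ 2)
    (hmoreau : ∀ x, moreau x = ψ (prox x) + ρ / 2 * ‖prox x - x‖ ^ 2)
    -- the current point and the stochastic one-step update
    (x : EuclideanSpace ℝ (Fin n)) (xplus : S → EuclideanSpace ℝ (Fin n))
    (hupdate : ∀ s y,
      fmod x (xplus s) s + w (xplus s) + γ / 2 * ‖xplus s - x‖ ^ 2
        ≤ fmod x y s + w y + γ / 2 * ‖y - x‖ ^ 2)
    (hint : Integrable (fun s => moreau (xplus s)) μ) :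
    ∫ s, moreau (xplus s) ∂μ
      ≤ moreau x - ρ * (ρ - τ - κ) / (2 * (γ - κ)) * ‖prox x - x‖ ^ 2
        + ∫ s, ρ * (Lip x s + Lw) ^ 2 / (2 * γ * (γ - κ)) ∂μ :=
  one_step_descent_unknown_lipschitz_general μ f w ψ fmod Lip κ τ ρ γ Lw prox moreau hκ hτ hρ hγ
    hψdef hw_weak hw_lip hmodel_conv hmodel_int hmodel_center hmodel_acc hLip_nonneg hD1 hLip_sq_int
    hprox hmoreau x xplus hupdate hint
end

section
/- Convergence rate for convex stochastic optimization under standard Lipschitz continuity: Run x^{k+1} = argmin_x { f_{x^k}(x,ξ^k) + ω(x) + (γ/2)‖x − x^k‖² } with i.i.d. samples ξ^k ∼ Ξ and constant stepsize γ = α√K, α > 0. Then for any optimal solution x* of min ψ, min_{1≤k≤K} E[ψ(x^k) − ψ(x*)] ≤ (1/(2√K)) [ ‖x¹ − x*‖² α + (L_f + L_ω)²/α ]. -/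
/-!
Conditioning on the first `k` samples is realised on the product space by resampling the `k`-th
coordinate: `(ω, s) ↦ update ω k s` preserves the product measure. For a fixed sample `ξ`, the
iterate `x^{k+1}` minimizes the convex function `f_{x^k}(·, ξ) + w` plus `γ/2 ‖· - x^k‖²`, so the
three-point inequality for such minimizers, the Lipschitz bound `L_f(ξ) + L_w` of the regularized
model and Young's inequality give
`f_{x^k}(x^k, ξ) + w(x^k) + γ/2 ‖x^{k+1} - x*‖²
  ≤ f_{x^k}(x*, ξ) + w(x*) + γ/2 ‖x^k - x*‖² + (L_f(ξ) + L_w)²/(2γ)`.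
Averaging over `ξ` and then over the past, and telescoping over `k < K`, bounds the average, hence
the minimum, of `E[ψ(x^k) - ψ(x*)]` by `γ/(2K) ‖x¹ - x*‖² + (L_f + L_w)²/(2γ)`, which is the
claimed bound for `γ = α√K`.
-/

open MeasureTheory Filter Topology Set

section Prox

variable {E : Type*} [NormedAddCommGroup E] [InnerProductSpace ℝ E]

def IsProxPoint (g : E → ℝ) (γ : ℝ) (x z : E) : Prop :=
  IsMinOn (fun u => g u + γ / 2 * ‖u - x‖ ^ 2) univ z

theorem IsProxPoint.sub_le_inner {g : E → ℝ} {γ : ℝ} {x z : E} (hz : IsProxPoint g γ x z)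
    (hg : ConvexOn ℝ univ g) (y : E) :
    g z - g y ≤ γ * inner ℝ (z - x) (y - z) := by
  set I := inner ℝ (z - x) (y - z)
  set N := ‖y - z‖ ^ 2
  -- compare `z` with the points `z + t • (y - z)` of the segment towards `y`, then let `t → 0`
  have hsegment : ∀ t ∈ Ioo (0 : ℝ) 1, g z - g y ≤ γ * I + γ / 2 * N * t := by
    rintro t ⟨ht0, ht1⟩
    have hconv : g (z + t • (y - z)) ≤ (1 - t) * g z + t * g y := by
      have := hg.2 (mem_univ z) (mem_univ y) (sub_nonneg.2 ht1.le) ht0.le (by ring)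
      rwa [show (1 - t) • z + t • y = z + t • (y - z) by module] at this
    have hnorm : ‖z + t • (y - z) - x‖ ^ 2 = ‖z - x‖ ^ 2 + 2 * t * I + t ^ 2 * N := by
      rw [show z + t • (y - z) - x = (z - x) + t • (y - z) by abel, norm_add_sq_real,
        inner_smul_right, norm_smul, mul_pow, Real.norm_eq_abs, sq_abs]
      ring
    have hmin : g z + γ / 2 * ‖z - x‖ ^ 2
        ≤ g (z + t • (y - z)) + γ / 2 * ‖z + t • (y - z) - x‖ ^ 2 :=
      hz (mem_univ _)
    rw [hnorm] at hmin
    refine le_of_mul_le_mul_left ?_ ht0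
    linear_combination hmin + hconv
  have hlim : Tendsto (fun t => γ * I + γ / 2 * N * t) (𝓝[>] 0) (𝓝 (γ * I)) := by
    have : Continuous fun t : ℝ => γ * I + γ / 2 * N * t := by fun_prop
    simpa using (this.tendsto 0).mono_left nhdsWithin_le_nhds
  exact ge_of_tendsto hlim (eventually_of_mem (Ioo_mem_nhdsGT one_pos) hsegment)

theorem IsProxPoint.add_sq_norm_le {g : E → ℝ} {γ : ℝ} {x z : E} (hz : IsProxPoint g γ x z)
    (hg : ConvexOn ℝ univ g) (y : E) :
    g z + γ / 2 * ‖z - x‖ ^ 2 + γ / 2 * ‖y - z‖ ^ 2 ≤ g y + γ / 2 * ‖y - x‖ ^ 2 := by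
  have hexp : ‖y - x‖ ^ 2 = ‖y - z‖ ^ 2 + 2 * inner ℝ (z - x) (y - z) + ‖z - x‖ ^ 2 := by
    rw [← sub_add_sub_cancel y z x, norm_add_sq_real, real_inner_comm]
  rw [hexp]
  linear_combination hz.sub_le_inner hg y

theorem IsProxPoint.le_add_sq_div {g : E → ℝ} {γ L : ℝ} {x z : E} (hz : IsProxPoint g γ x z)
    (hg : ConvexOn ℝ univ g) (hγ : 0 < γ) (hL : g x - g z ≤ L * ‖x - z‖) (y : E) :
    g x + γ / 2 * ‖z - y‖ ^ 2 ≤ g y + γ / 2 * ‖x - y‖ ^ 2 + L ^ 2 / (2 * γ) := by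
  have hthree := hz.add_sq_norm_le hg y
  rw [norm_sub_rev z x, norm_sub_rev y z, norm_sub_rev y x] at hthree
  have hyoung : L * ‖x - z‖ - γ / 2 * ‖x - z‖ ^ 2 ≤ L ^ 2 / (2 * γ) := by
    rw [le_div_iff₀ (by positivity)]
    nlinarith [sq_nonneg (L - γ * ‖x - z‖)]
  linarith

end Prox

section Moments

variable {S : Type*} [MeasurableSpace S] {μ : Measure S}

theorem memLp_two_of_integrable_sq_of_nonneg {g : S → ℝ} (hg : Integrable (fun s => g s ^ 2) μ)
    (hg0 : ∀ s, 0 ≤ g s) : MemLp g 2 μ := by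
  refine (memLp_two_iff_integrable_sq ?_).2 hg
  refine (Real.continuous_sqrt.comp_aestronglyMeasurable hg.aestronglyMeasurable).congr ?_
  exact ae_of_all _ fun s => Real.sqrt_sq (hg0 s)

theorem integral_add_const_sq_le [IsProbabilityMeasure μ] {g : S → ℝ} (hg : MemLp g 2 μ)
    {M c : ℝ} (hM : 0 ≤ M) (hc : 0 ≤ c) (hgM : ∫ s, g s ^ 2 ∂μ ≤ M ^ 2) :
    ∫ s, (g s + c) ^ 2 ∂μ ≤ (M + c) ^ 2 := by
  have hjensen : (∫ s, g s ∂μ) ^ 2 ≤ ∫ s, g s ^ 2 ∂μ := by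
    have := ProbabilityTheory.variance_nonneg g μ
    rw [ProbabilityTheory.variance_eq_sub hg] at this
    simpa using this
  have hmean : ∫ s, g s ∂μ ≤ M := le_of_sq_le_sq (hjensen.trans hgM) hM
  have hexpand : ∫ s, (g s + c) ^ 2 ∂μ = ∫ s, g s ^ 2 ∂μ + 2 * c * ∫ s, g s ∂μ + c ^ 2 := by
    have hlin : Integrable (fun s => 2 * g s * c) μ :=
      ((hg.integrable one_le_two).const_mul 2).mul_const c
    simp_rw [add_sq]
    rw [integral_add (f := fun s => g s ^ 2 + 2 * g s * c) (hg.integrable_sq.add hlin)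
        (integrable_const _), integral_add hg.integrable_sq hlin, integral_mul_const,
      integral_const_mul, integral_const, probReal_univ, one_smul]
    ring
  rw [hexpand]
  nlinarith

end Moments

section Resampling

variable {ι S : Type*} [Fintype ι] [DecidableEq ι] [MeasurableSpace S] (μ : Measure S)
  [IsProbabilityMeasure μ]

theorem measurePreserving_update_pi (i : ι) :
    MeasurePreserving (fun p : (ι → S) × S => Function.update p.1 i p.2)
      ((Measure.pi fun _ => μ).prod μ) (Measure.pi fun _ => μ) := by
  refine ⟨by fun_prop, (Measure.pi_eq fun s hs => ?_).symm⟩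
  have hpre : (fun p : (ι → S) × S => Function.update p.1 i p.2) ⁻¹' univ.pi s
      = univ.pi (Function.update s i univ) ×ˢ s i := by
    ext ⟨ω, x⟩
    simp only [mem_preimage, mem_prod, mem_univ_pi]
    rw [Function.forall_update_iff ω fun j t => t ∈ s j,
      Function.forall_update_iff s fun j t => ω j ∈ t]
    simp [and_comm]
  rw [Measure.map_apply (by fun_prop) (MeasurableSet.univ_pi hs), hpre, Measure.prod_prod,
    Measure.pi_pi, ← Finset.prod_erase_mul _ _ (Finset.mem_univ i),
    ← Finset.prod_erase_mul _ _ (Finset.mem_univ i)]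
  simp only [Function.update_self, measure_univ, mul_one]
  exact congrArg (· * _) <| Finset.prod_congr rfl fun j hj => by
    rw [Function.update_of_ne (Finset.ne_of_mem_erase hj)]

variable {μ} {F : Type*} [NormedAddCommGroup F]

theorem MeasureTheory.Integrable.comp_update {G : (ι → S) → F}
    (hG : Integrable G (Measure.pi fun _ => μ)) (i : ι) :
    Integrable (fun p : (ι → S) × S => G (Function.update p.1 i p.2))
      ((Measure.pi fun _ => μ).prod μ) :=
  (measurePreserving_update_pi μ i).integrable_comp_of_integrable hG

theorem integral_eq_integral_integral_update [NormedSpace ℝ F] {G : (ι → S) → F}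
    (hG : Integrable G (Measure.pi fun _ => μ)) (i : ι) :
    ∫ ω, G ω ∂(Measure.pi fun _ => μ)
      = ∫ ω, ∫ s, G (Function.update ω i s) ∂μ ∂(Measure.pi fun _ => μ) := by
  have hu := measurePreserving_update_pi μ i
  rw [← integral_prod _ (hG.comp_update i)]
  conv_lhs => rw [← hu.map_eq]
  exact integral_map hu.measurable.aemeasurable (by rw [hu.map_eq]; exact hG.aestronglyMeasurable)

theorem integral_le_of_ae_integral_update_le {G H : (ι → S) → ℝ} (i : ι)
    (hG : Integrable G (Measure.pi fun _ => μ)) (hH : Integrable H (Measure.pi fun _ => μ))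
    (hle : ∀ᵐ ω ∂(Measure.pi fun _ => μ), ∫ s, G (Function.update ω i s) ∂μ ≤ H ω) :
    ∫ ω, G ω ∂(Measure.pi fun _ => μ) ≤ ∫ ω, H ω ∂(Measure.pi fun _ => μ) := by
  rw [integral_eq_integral_integral_update hG i]
  exact integral_mono_ae (hG.comp_update i).integral_prod_left hH hle

end Resampling

section StochasticProx

variable {E : Type*} [NormedAddCommGroup E] [InnerProductSpace ℝ E] {S : Type*}
  [MeasurableSpace S]

structure IsConvexStochasticModel (μ : Measure S) (f : E → ℝ) (fmod : E → E → S → ℝ) : Prop where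
  convexOn : ∀ x s, ConvexOn ℝ univ (fun y => fmod x y s)
  integrable : ∀ x y, Integrable (fun s => fmod x y s) μ
  integral_self : ∀ x, ∫ s, fmod x x s ∂μ = f x
  integral_le : ∀ x y, ∫ s, fmod x y s ∂μ ≤ f y

variable {μ : Measure S} [IsProbabilityMeasure μ]

theorem integral_add_sq_norm_le_of_isProxPoint {h : S → E → ℝ} {γ : ℝ} {L : S → ℝ} {x y : E}
    {z : S → E} (hz : ∀ s, IsProxPoint (h s) γ x (z s)) (hconv : ∀ s, ConvexOn ℝ univ (h s))
    (hγ : 0 < γ) (hL : ∀ s, h s x - h s (z s) ≤ L s * ‖x - z s‖)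
    (hx : Integrable (fun s => h s x) μ) (hy : Integrable (fun s => h s y) μ)
    (hzy : Integrable (fun s => ‖z s - y‖ ^ 2) μ) (hL2 : Integrable (fun s => L s ^ 2) μ) :
    ∫ s, h s x ∂μ + γ / 2 * ∫ s, ‖z s - y‖ ^ 2 ∂μ
      ≤ ∫ s, h s y ∂μ + γ / 2 * ‖x - y‖ ^ 2 + (∫ s, L s ^ 2 ∂μ) / (2 * γ) := by
  calc ∫ s, h s x ∂μ + γ / 2 * ∫ s, ‖z s - y‖ ^ 2 ∂μ
      = ∫ s, (h s x + γ / 2 * ‖z s - y‖ ^ 2) ∂μ := by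
        rw [integral_add hx (hzy.const_mul _), integral_const_mul]
    _ ≤ ∫ s, (h s y + γ / 2 * ‖x - y‖ ^ 2 + L s ^ 2 / (2 * γ)) ∂μ :=
        integral_mono (hx.add (hzy.const_mul _))
          ((hy.add (integrable_const _)).add (hL2.div_const _))
          fun s => (hz s).le_add_sq_div (hconv s) hγ (hL s) y
    _ = ∫ s, h s y ∂μ + γ / 2 * ‖x - y‖ ^ 2 + (∫ s, L s ^ 2 ∂μ) / (2 * γ) := by
        rw [integral_add (f := fun s => h s y + γ / 2 * ‖x - y‖ ^ 2)
          (hy.add (integrable_const _)) (hL2.div_const _), integral_add hy (integrable_const _),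
          integral_const, integral_div, probReal_univ, one_smul]

namespace IsConvexStochasticModel

variable {f w ψ : E → ℝ} {fmod : E → E → S → ℝ} {L : S → ℝ} {M γ : ℝ}

theorem sub_add_integral_sq_norm_le (hmodel : IsConvexStochasticModel μ f fmod)
    (hψ : ∀ x, ψ x = f x + w x) (hw : ConvexOn ℝ univ w)
    (hL : ∀ x y z s, fmod x y s + w y - (fmod x z s + w z) ≤ L s * ‖y - z‖)
    (hL2 : Integrable (fun s => L s ^ 2) μ) (hLM : ∫ s, L s ^ 2 ∂μ ≤ M ^ 2) (hγ : 0 < γ)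
    {x y : E} {z : S → E} (hz : ∀ s, IsProxPoint (fun u => fmod x u s + w u) γ x (z s))
    (hzy : Integrable (fun s => ‖z s - y‖ ^ 2) μ) :
    ψ x - ψ y + γ / 2 * ∫ s, ‖z s - y‖ ^ 2 ∂μ ≤ γ / 2 * ‖x - y‖ ^ 2 + M ^ 2 / (2 * γ) := by
  have hstep := integral_add_sq_norm_le_of_isProxPoint hz
    (fun s => (hmodel.convexOn x s).add hw) hγ (fun s => hL x x _ s)
    ((hmodel.integrable x x).add (integrable_const _))
    ((hmodel.integrable x y).add (integrable_const _)) hzy hL2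
  rw [integral_add (hmodel.integrable x x) (integrable_const _), hmodel.integral_self,
    integral_add (hmodel.integrable x y) (integrable_const _), integral_const, integral_const,
    probReal_univ, one_smul, one_smul] at hstep
  have hLM' : (∫ s, L s ^ 2 ∂μ) / (2 * γ) ≤ M ^ 2 / (2 * γ) := by gcongr
  rw [hψ, hψ]
  linarith [hmodel.integral_le x y]

variable {ι : Type*} [Fintype ι] [DecidableEq ι]

theorem integral_sub_add_integral_sq_norm_le (hmodel : IsConvexStochasticModel μ f fmod)
    (hψ : ∀ x, ψ x = f x + w x) (hw : ConvexOn ℝ univ w)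
    (hL : ∀ x y z s, fmod x y s + w y - (fmod x z s + w z) ≤ L s * ‖y - z‖)
    (hL2 : Integrable (fun s => L s ^ 2) μ) (hLM : ∫ s, L s ^ 2 ∂μ ≤ M ^ 2) (hγ : 0 < γ)
    (i : ι) {x₀ x₁ : (ι → S) → E} (hx₀ : ∀ ω s, x₀ (Function.update ω i s) = x₀ ω)
    (hx₁ : ∀ ω, IsProxPoint (fun u => fmod (x₀ ω) u (ω i) + w u) γ (x₀ ω) (x₁ ω)) (y : E)
    (hψ₀ : Integrable (fun ω => ψ (x₀ ω)) (Measure.pi fun _ => μ))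
    (hd₀ : Integrable (fun ω => ‖x₀ ω - y‖ ^ 2) (Measure.pi fun _ => μ))
    (hd₁ : Integrable (fun ω => ‖x₁ ω - y‖ ^ 2) (Measure.pi fun _ => μ)) :
    ∫ ω, (ψ (x₀ ω) - ψ y) ∂(Measure.pi fun _ => μ)
        + γ / 2 * ∫ ω, ‖x₁ ω - y‖ ^ 2 ∂(Measure.pi fun _ => μ)
      ≤ γ / 2 * ∫ ω, ‖x₀ ω - y‖ ^ 2 ∂(Measure.pi fun _ => μ) + M ^ 2 / (2 * γ) := by
  have hsample : ∀ᵐ ω ∂(Measure.pi fun _ => μ),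
      ∫ s, (ψ (x₀ (Function.update ω i s)) - ψ y
          + γ / 2 * ‖x₁ (Function.update ω i s) - y‖ ^ 2) ∂μ
        ≤ γ / 2 * ‖x₀ ω - y‖ ^ 2 + M ^ 2 / (2 * γ) := by
    filter_upwards [(hd₁.comp_update i).prod_right_ae] with ω hω
    simp only [hx₀]
    rw [integral_add (integrable_const _) (hω.const_mul _), integral_const_mul, integral_const,
      probReal_univ, one_smul]
    exact hmodel.sub_add_integral_sq_norm_le hψ hw hL hL2 hLM hγ
      (fun s => by simpa [hx₀] using hx₁ (Function.update ω i s)) hω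
  calc ∫ ω, (ψ (x₀ ω) - ψ y) ∂(Measure.pi fun _ => μ)
        + γ / 2 * ∫ ω, ‖x₁ ω - y‖ ^ 2 ∂(Measure.pi fun _ => μ)
      = ∫ ω, (ψ (x₀ ω) - ψ y + γ / 2 * ‖x₁ ω - y‖ ^ 2) ∂(Measure.pi fun _ => μ) := by
        rw [integral_add (f := fun ω => ψ (x₀ ω) - ψ y) (hψ₀.sub (integrable_const _))
          (hd₁.const_mul _), integral_const_mul]
    _ ≤ ∫ ω, (γ / 2 * ‖x₀ ω - y‖ ^ 2 + M ^ 2 / (2 * γ)) ∂(Measure.pi fun _ => μ) :=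
        integral_le_of_ae_integral_update_le i
          ((hψ₀.sub (integrable_const _)).add (hd₁.const_mul _))
          ((hd₀.const_mul _).add (integrable_const _)) hsample
    _ = γ / 2 * ∫ ω, ‖x₀ ω - y‖ ^ 2 ∂(Measure.pi fun _ => μ) + M ^ 2 / (2 * γ) := by
        rw [integral_add (hd₀.const_mul _) (integrable_const _), integral_const_mul,
          integral_const, probReal_univ, one_smul]

end IsConvexStochasticModel

end StochasticProx

theorem exists_lt_le_div_add_of_telescoping {K : ℕ} (hK : 0 < K) {a D : ℕ → ℝ} {c : ℝ}
    (hD : 0 ≤ D K) (hstep : ∀ k < K, a k + D (k + 1) ≤ D k + c) :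
    ∃ k < K, a k ≤ D 0 / K + c := by
  have hsum : ∑ k ∈ Finset.range K, a k ≤ ∑ _k ∈ Finset.range K, (D 0 / K + c) := by
    calc ∑ k ∈ Finset.range K, a k
        ≤ ∑ k ∈ Finset.range K, (D k - D (k + 1) + c) :=
          Finset.sum_le_sum fun k hk => by linarith [hstep k (Finset.mem_range.1 hk)]
      _ = D 0 - D K + K * c := by
          rw [Finset.sum_add_distrib, Finset.sum_range_sub', Finset.sum_const,
            Finset.card_range, nsmul_eq_mul]
      _ ≤ ∑ _k ∈ Finset.range K, (D 0 / K + c) := by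
          rw [Finset.sum_const, Finset.card_range, nsmul_eq_mul, mul_add,
            mul_div_cancel₀ _ (by positivity)]
          linarith
  obtain ⟨k, hk, hle⟩ := Finset.exists_le_of_sum_le (Finset.nonempty_range_iff.2 hK.ne') hsum
  exact ⟨k, Finset.mem_range.1 hk, hle⟩

theorem convex_rate_standard_lipschitz_general
    {n : ℕ} {S : Type*} [MeasurableSpace S] (μ : Measure S) [IsProbabilityMeasure μ]
    (f w ψ : EuclideanSpace ℝ (Fin n) → ℝ)
    (fmod : EuclideanSpace ℝ (Fin n) → EuclideanSpace ℝ (Fin n) → S → ℝ)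
    (Lfs : S → ℝ) (Lf Lw α : ℝ)
    -- basic parameter assumptions
    (hα : 0 < α) (hLf : 0 ≤ Lf) (hLw : 0 ≤ Lw)
    -- convex composite objective
    (hψdef : ∀ x, ψ x = f x + w x)
    (hw_conv : ConvexOn ℝ Set.univ w)
    (hw_lip : ∀ x y, |w x - w y| ≤ Lw * ‖x - y‖)
    -- properties of the stochastic model (with τ = 0)
    (hmodel_conv : ∀ x s, ConvexOn ℝ Set.univ (fun y => fmod x y s))
    (hmodel_int : ∀ x y, Integrable (fun s => fmod x y s) μ)
    (hmodel_center : ∀ x, ∫ s, fmod x x s ∂μ = f x)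
    (hmodel_under : ∀ x y, ∫ s, fmod x y s ∂μ ≤ f y)
    -- B1: standard Lipschitz continuity of the models
    (hB1 : ∀ x y z s, fmod x y s - fmod x z s ≤ Lfs s * ‖y - z‖)
    (hLfs_nonneg : ∀ s, 0 ≤ Lfs s)
    (hLfs_int : Integrable (fun s => Lfs s ^ 2) μ)
    (hLfs_bound : ∫ s, Lfs s ^ 2 ∂μ ≤ Lf ^ 2)
    -- an optimal solution
    (xstar : EuclideanSpace ℝ (Fin n))
    -- the algorithm: `K` iterations, i.i.d. samples, constant stepsize `α√K`
    (K : ℕ) (hK : 1 ≤ K)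
    (X : ℕ → (Fin K → S) → EuclideanSpace ℝ (Fin n))
    (x1 : EuclideanSpace ℝ (Fin n)) (hX0 : ∀ ω, X 0 ω = x1)
    (hXadapt : ∀ k, ∀ ω ω' : Fin K → S,
      (∀ i : Fin K, (i : ℕ) < k → ω i = ω' i) → X k ω = X k ω')
    (hupdate : ∀ k (hk : k < K) (ω : Fin K → S) (y : EuclideanSpace ℝ (Fin n)),
      fmod (X k ω) (X (k + 1) ω) (ω ⟨k, hk⟩) + w (X (k + 1) ω)
          + α * Real.sqrt K / 2 * ‖X (k + 1) ω - X k ω‖ ^ 2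
        ≤ fmod (X k ω) y (ω ⟨k, hk⟩) + w y
          + α * Real.sqrt K / 2 * ‖y - X k ω‖ ^ 2)
    -- integrability of the relevant functionals of the iterates
    (hψint : ∀ k, Integrable (fun ω => ψ (X k ω)) (Measure.pi fun _ : Fin K => μ))
    (hdint : ∀ k, Integrable (fun ω => ‖X k ω - xstar‖ ^ 2)
      (Measure.pi fun _ : Fin K => μ)) :
    ∃ k < K,
      (∫ ω, (ψ (X k ω) - ψ xstar) ∂(Measure.pi fun _ : Fin K => μ))
        ≤ 1 / (2 * Real.sqrt K)
            * (‖x1 - xstar‖ ^ 2 * α + (Lf + Lw) ^ 2 / α) := by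
  set P := Measure.pi fun _ : Fin K => μ
  have hγ : 0 < α * Real.sqrt K := mul_pos hα (Real.sqrt_pos.2 (by exact_mod_cast hK))
  have hmodel : IsConvexStochasticModel μ f fmod :=
    ⟨hmodel_conv, hmodel_int, hmodel_center, hmodel_under⟩
  have hLfs : MemLp Lfs 2 μ := memLp_two_of_integrable_sq_of_nonneg hLfs_int hLfs_nonneg
  have hL : ∀ x y z s, fmod x y s + w y - (fmod x z s + w z) ≤ (Lfs s + Lw) * ‖y - z‖ :=
    fun x y z s => by
      linarith [hB1 x y z s, (le_abs_self _).trans (hw_lip y z), add_mul (Lfs s) Lw ‖y - z‖]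
  obtain ⟨k, hk, hle⟩ := exists_lt_le_div_add_of_telescoping hK
    (a := fun k => ∫ ω, (ψ (X k ω) - ψ xstar) ∂P)
    (D := fun k => α * Real.sqrt K / 2 * ∫ ω, ‖X k ω - xstar‖ ^ 2 ∂P) (by positivity)
    fun k hk => hmodel.integral_sub_add_integral_sq_norm_le hψdef hw_conv hL
      (hLfs.add (memLp_const Lw)).integrable_sq
      (integral_add_const_sq_le hLfs hLf hLw hLfs_bound) hγ ⟨k, hk⟩
      (fun ω s => hXadapt k _ _ fun j hj => Function.update_of_ne (Fin.ne_of_val_ne hj.ne) _ _)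
      (fun ω => isMinOn_univ_iff.2 (hupdate k hk ω)) xstar (hψint k) (hdint k) (hdint (k + 1))
  refine ⟨k, hk, hle.trans_eq ?_⟩
  simp only [hX0, integral_const, probReal_univ, one_smul]
  field_simp
  rw [Real.sq_sqrt (Nat.cast_nonneg _)]
  ring

/-- **Theorem D.1** (convergence rate for convex stochastic optimization under standard
Lipschitz continuity).  The algorithm is run for `K` steps on the product space
`Fin K → S` with the i.i.d. product measure: `X k` (representing `x^{k+1}`, `X 0 = x¹`)
depends only on the first `k` samples and `X (k+1)` minimizes the regularized model
built at `X k` with the `k`-th sample, using the constant stepsize `γ = α√K`.  Then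
`min_{1≤k≤K} E[ψ(x^k) - ψ(x*)] ≤ (1/(2√K))[‖x¹-x*‖²α + (L_f+L_ω)²/α]`. -/
theorem convex_rate_standard_lipschitz
    {n : ℕ} {S : Type*} [MeasurableSpace S] (μ : Measure S) [IsProbabilityMeasure μ]
    (f w ψ : EuclideanSpace ℝ (Fin n) → ℝ)
    (fmod : EuclideanSpace ℝ (Fin n) → EuclideanSpace ℝ (Fin n) → S → ℝ)
    (Lfs : S → ℝ) (Lf Lw α : ℝ)
    -- basic parameter assumptions
    (hα : 0 < α) (hLf : 0 ≤ Lf) (hLw : 0 ≤ Lw)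
    -- convex composite objective
    (hψdef : ∀ x, ψ x = f x + w x)
    (hf_conv : ConvexOn ℝ Set.univ f)
    (hw_conv : ConvexOn ℝ Set.univ w)
    (hw_lip : ∀ x y, |w x - w y| ≤ Lw * ‖x - y‖)
    -- properties of the stochastic model (with τ = 0)
    (hmodel_conv : ∀ x s, ConvexOn ℝ Set.univ (fun y => fmod x y s))
    (hmodel_int : ∀ x y, Integrable (fun s => fmod x y s) μ)
    (hmodel_center : ∀ x, ∫ s, fmod x x s ∂μ = f x)
    (hmodel_under : ∀ x y, ∫ s, fmod x y s ∂μ ≤ f y)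
    -- B1: standard Lipschitz continuity of the models
    (hB1 : ∀ x y z s, fmod x y s - fmod x z s ≤ Lfs s * ‖y - z‖)
    (hLfs_nonneg : ∀ s, 0 ≤ Lfs s)
    (hLfs_int : Integrable (fun s => Lfs s ^ 2) μ)
    (hLfs_bound : ∫ s, Lfs s ^ 2 ∂μ ≤ Lf ^ 2)
    -- an optimal solution
    (xstar : EuclideanSpace ℝ (Fin n)) (hxstar : ∀ y, ψ xstar ≤ ψ y)
    -- the algorithm: `K` iterations, i.i.d. samples, constant stepsize `α√K`
    (K : ℕ) (hK : 1 ≤ K)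
    (X : ℕ → (Fin K → S) → EuclideanSpace ℝ (Fin n))
    (x1 : EuclideanSpace ℝ (Fin n)) (hX0 : ∀ ω, X 0 ω = x1)
    (hXmeas : ∀ k, Measurable (X k))
    (hXadapt : ∀ k, ∀ ω ω' : Fin K → S,
      (∀ i : Fin K, (i : ℕ) < k → ω i = ω' i) → X k ω = X k ω')
    (hupdate : ∀ k (hk : k < K) (ω : Fin K → S) (y : EuclideanSpace ℝ (Fin n)),
      fmod (X k ω) (X (k + 1) ω) (ω ⟨k, hk⟩) + w (X (k + 1) ω)
          + α * Real.sqrt K / 2 * ‖X (k + 1) ω - X k ω‖ ^ 2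
        ≤ fmod (X k ω) y (ω ⟨k, hk⟩) + w y
          + α * Real.sqrt K / 2 * ‖y - X k ω‖ ^ 2)
    -- integrability of the relevant functionals of the iterates
    (hψint : ∀ k, Integrable (fun ω => ψ (X k ω)) (Measure.pi fun _ : Fin K => μ))
    (hdint : ∀ k, Integrable (fun ω => ‖X k ω - xstar‖ ^ 2)
      (Measure.pi fun _ : Fin K => μ)) :
    ∃ k < K,
      (∫ ω, (ψ (X k ω) - ψ xstar) ∂(Measure.pi fun _ : Fin K => μ))
        ≤ 1 / (2 * Real.sqrt K)
            * (‖x1 - xstar‖ ^ 2 * α + (Lf + Lw) ^ 2 / α) :=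
  convex_rate_standard_lipschitz_general μ f w ψ fmod Lfs Lf Lw α hα hLf hLw hψdef hw_conv hw_lip
    hmodel_conv hmodel_int hmodel_center hmodel_under hB1 hLfs_nonneg hLfs_int hLfs_bound xstar K hK
    X x1 hX0 hXadapt hupdate hψint hdint
end
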